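/- arXiv:2405.20053 — 2 statements merged into one kernel-verified Lean document; each statement's English description precedes it below -/
import Mathlib

section
/- For every label-smoothing parameter ε with 0 < ε ≤ 1/2, the Separable DPH loss L_sep(r_w, r_l) = -[(1-ε)·log σ(r_w) + ε·log σ(-r_w)] - [ε·log σ(r_l) + (1-ε)·log σ(-r_l)] is a convex function of (r_w, r_l) ∈ ℝ² and attains its global minimum exactly at the point r_w = log((1-ε)/ε), r_l = log(ε/(1-ε)). -/
noncomputable def sigmoid (x : ℝ) : ℝ := 1 / (1 + Real.exp (-x))

noncomputable def Lsep (ε rw rl : ℝ) : ℝ :=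
  -((1 - ε) * Real.log (sigmoid rw) + ε * Real.log (sigmoid (-rw)))
  - (ε * Real.log (sigmoid rl) + (1 - ε) * Real.log (sigmoid (-rl)))

noncomputable def phiDPH (a x : ℝ) : ℝ := Real.log (1 + Real.exp x) - a * x

lemma one_add_exp_pos (x : ℝ) : (0:ℝ) < 1 + Real.exp x := by positivity

lemma S_neg (x : ℝ) :
    Real.log (1 + Real.exp (-x)) = Real.log (1 + Real.exp x) - x := by
  have h : (1 : ℝ) + Real.exp (-x) = Real.exp (-x) * (1 + Real.exp x) := by
    rw [mul_add, mul_one, ← Real.exp_add, neg_add_cancel, Real.exp_zero, add_comm]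
  rw [h, Real.log_mul (Real.exp_ne_zero _) (one_add_exp_pos x).ne', Real.log_exp]
  ring

lemma log_sigmoid (x : ℝ) :
    Real.log (sigmoid x) = x - Real.log (1 + Real.exp x) := by
  unfold sigmoid
  rw [Real.log_div one_ne_zero (one_add_exp_pos (-x)).ne', Real.log_one, S_neg]
  ring

lemma Lsep_eq (ε rw rl : ℝ) :
    Lsep ε rw rl = phiDPH (1 - ε) rw + phiDPH ε rl := by
  simp only [Lsep, log_sigmoid, neg_neg, S_neg, phiDPH]
  ring

lemma hasDerivAt_phiDPH (a x : ℝ) :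
    HasDerivAt (phiDPH a) (Real.exp x / (1 + Real.exp x) - a) x := by
  have h1 : HasDerivAt (fun x : ℝ => Real.log (1 + Real.exp x))
      (Real.exp x / (1 + Real.exp x)) x :=
    ((Real.hasDerivAt_exp x).const_add 1).log (one_add_exp_pos x).ne'
  have h2 : HasDerivAt (fun x : ℝ => a * x) a x := by
    simpa using (hasDerivAt_id x).const_mul a
  exact h1.sub h2

lemma continuous_phiDPH (a : ℝ) : Continuous (phiDPH a) := by
  apply Continuous.sub
  · exact (continuous_const.add Real.continuous_exp).log fun x => (one_add_exp_pos x).ne'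
  · exact continuous_const.mul continuous_id

lemma deriv_phiDPH (a x : ℝ) :
    deriv (phiDPH a) x = Real.exp x / (1 + Real.exp x) - a :=
  (hasDerivAt_phiDPH a x).deriv

lemma deriv_phiDPH_pos {a x : ℝ} (ha0 : 0 < a) (ha1 : a < 1)
    (hx : Real.log (a / (1 - a)) < x) : 0 < deriv (phiDPH a) x := by
  rw [deriv_phiDPH]
  have h1a : 0 < 1 - a := by linarith
  have hq : (0:ℝ) < a / (1 - a) := div_pos ha0 h1a
  have he : a / (1 - a) < Real.exp x := by
    calc a / (1 - a) = Real.exp (Real.log (a / (1 - a))) := (Real.exp_log hq).symm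
    _ < Real.exp x := Real.exp_lt_exp.2 hx
  have hp := one_add_exp_pos x
  rw [sub_pos, lt_div_iff₀ hp]
  have := (div_lt_iff₀ h1a).1 he
  nlinarith

lemma deriv_phiDPH_neg {a x : ℝ} (ha0 : 0 < a) (ha1 : a < 1)
    (hx : x < Real.log (a / (1 - a))) : deriv (phiDPH a) x < 0 := by
  rw [deriv_phiDPH]
  have h1a : 0 < 1 - a := by linarith
  have hq : (0:ℝ) < a / (1 - a) := div_pos ha0 h1a
  have he : Real.exp x < a / (1 - a) := by
    calc Real.exp x < Real.exp (Real.log (a / (1 - a))) := Real.exp_lt_exp.2 hx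
    _ = a / (1 - a) := Real.exp_log hq
  have hp := one_add_exp_pos x
  rw [sub_neg, div_lt_iff₀ hp]
  have := (lt_div_iff₀ h1a).1 he
  nlinarith

/-- Strict global minimum of `phiDPH a` at `log (a/(1-a))`. -/
lemma phiDPH_strict_min {a : ℝ} (ha0 : 0 < a) (ha1 : a < 1) {x : ℝ}
    (hx : x ≠ Real.log (a / (1 - a))) :
    phiDPH a (Real.log (a / (1 - a))) < phiDPH a x := by
  set m := Real.log (a / (1 - a)) with hm
  rcases lt_or_gt_of_ne hx with h | h
  · -- x < m : strictly decreasing on Icc x m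
    have hanti : StrictAntiOn (phiDPH a) (Set.Icc x m) := by
      apply strictAntiOn_of_deriv_neg (convex_Icc x m)
        (continuous_phiDPH a).continuousOn
      intro y hy
      rw [interior_Icc] at hy
      exact deriv_phiDPH_neg ha0 ha1 hy.2
    exact hanti (Set.mem_Icc.2 ⟨le_refl x, h.le⟩) (Set.mem_Icc.2 ⟨h.le, le_refl m⟩) h
  · -- m < x : strictly increasing on Icc m x
    have hmono : StrictMonoOn (phiDPH a) (Set.Icc m x) := by
      apply strictMonoOn_of_deriv_pos (convex_Icc m x)
        (continuous_phiDPH a).continuousOn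
      intro y hy
      rw [interior_Icc] at hy
      exact deriv_phiDPH_pos ha0 ha1 hy.1
    exact hmono (Set.mem_Icc.2 ⟨le_refl m, h.le⟩) (Set.mem_Icc.2 ⟨h.le, le_refl x⟩) h

lemma phiDPH_min {a : ℝ} (ha0 : 0 < a) (ha1 : a < 1) (x : ℝ) :
    phiDPH a (Real.log (a / (1 - a))) ≤ phiDPH a x := by
  by_cases h : x = Real.log (a / (1 - a))
  · rw [h]
  · exact (phiDPH_strict_min ha0 ha1 h).le

lemma convexOn_phiDPH (a : ℝ) : ConvexOn ℝ Set.univ (phiDPH a) := by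
  apply MonotoneOn.convexOn_of_deriv convex_univ
    (continuous_phiDPH a).continuousOn
    (fun x _ => ((hasDerivAt_phiDPH a x).differentiableAt).differentiableWithinAt)
  intro x _ y _ hxy
  rw [deriv_phiDPH, deriv_phiDPH]
  have hx := one_add_exp_pos x
  have hy := one_add_exp_pos y
  have hexy : Real.exp x ≤ Real.exp y := Real.exp_le_exp.2 hxy
  have : Real.exp x / (1 + Real.exp x) ≤ Real.exp y / (1 + Real.exp y) := by
    rw [div_le_div_iff₀ hx hy]; nlinarith
  linarith

/-- For every `0 < ε ≤ 1/2`, the Separable DPH loss is convex on `ℝ²` and attains its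
global minimum exactly at `(log((1-ε)/ε), log(ε/(1-ε)))`. -/
theorem sep_dph_convex_and_unique_min (ε : ℝ) (hε0 : 0 < ε) (hε1 : ε ≤ 1 / 2) :
    ConvexOn ℝ Set.univ (fun p : ℝ × ℝ => Lsep ε p.1 p.2) ∧
    IsMinOn (fun p : ℝ × ℝ => Lsep ε p.1 p.2) Set.univ
      (Real.log ((1 - ε) / ε), Real.log (ε / (1 - ε))) ∧
    ∀ p : ℝ × ℝ,
      IsMinOn (fun p : ℝ × ℝ => Lsep ε p.1 p.2) Set.univ p →
        p = (Real.log ((1 - ε) / ε), Real.log (ε / (1 - ε))) := by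
  have hε1' : ε < 1 := by linarith
  have h1ε0 : 0 < 1 - ε := by linarith
  have h1ε1 : 1 - ε < 1 := by linarith
  have key1 : (1 - ε) / (1 - (1 - ε)) = (1 - ε) / ε := by ring_nf
  have key2 : Real.log ((1 - ε) / (1 - (1 - ε))) = Real.log ((1 - ε) / ε) := by
    rw [key1]
  set m1 := Real.log ((1 - ε) / ε) with hm1
  set m2 := Real.log (ε / (1 - ε)) with hm2
  have hmin1 : ∀ x : ℝ, phiDPH (1 - ε) m1 ≤ phiDPH (1 - ε) x := by
    intro x
    have h := phiDPH_min h1ε0 h1ε1 x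
    rwa [key2] at h
  have hmin2 : ∀ x : ℝ, phiDPH ε m2 ≤ phiDPH ε x := fun x =>
    phiDPH_min hε0 hε1' x
  have hstrict1 : ∀ x : ℝ, x ≠ m1 → phiDPH (1 - ε) m1 < phiDPH (1 - ε) x := by
    intro x hx
    have h := phiDPH_strict_min h1ε0 h1ε1 (x := x) (by rw [key2]; exact hx)
    rwa [key2] at h
  have hstrict2 : ∀ x : ℝ, x ≠ m2 → phiDPH ε m2 < phiDPH ε x := fun x hx =>
    phiDPH_strict_min hε0 hε1' hx
  have heq : (fun p : ℝ × ℝ => Lsep ε p.1 p.2)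
      = fun p : ℝ × ℝ => phiDPH (1 - ε) p.1 + phiDPH ε p.2 := by
    funext p; exact Lsep_eq ε p.1 p.2
  refine ⟨?_, ?_, ?_⟩
  · -- convexity
    rw [heq]
    have c1 : ConvexOn ℝ (Set.univ : Set (ℝ × ℝ)) (fun p : ℝ × ℝ => phiDPH (1 - ε) p.1) := by
      refine ⟨convex_univ, fun p _ q _ a b ha hb hab => ?_⟩
      have := (convexOn_phiDPH (1 - ε)).2 (Set.mem_univ p.1) (Set.mem_univ q.1) ha hb hab
      simpa using this
    have c2 : ConvexOn ℝ (Set.univ : Set (ℝ × ℝ)) (fun p : ℝ × ℝ => phiDPH ε p.2) := by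
      refine ⟨convex_univ, fun p _ q _ a b ha hb hab => ?_⟩
      have := (convexOn_phiDPH ε).2 (Set.mem_univ p.2) (Set.mem_univ q.2) ha hb hab
      simpa using this
    exact c1.add c2
  · -- min
    rw [heq]
    exact isMinOn_iff.2 fun p _ => add_le_add (hmin1 p.1) (hmin2 p.2)
  · -- uniqueness
    intro p hp
    rw [heq] at hp
    have h1 : phiDPH (1 - ε) p.1 + phiDPH ε p.2 ≤ phiDPH (1 - ε) m1 + phiDPH ε p.2 :=
      isMinOn_iff.1 hp ((m1, p.2) : ℝ × ℝ) (Set.mem_univ _)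
    have h2 : phiDPH (1 - ε) p.1 + phiDPH ε p.2 ≤ phiDPH (1 - ε) p.1 + phiDPH ε m2 :=
      isMinOn_iff.1 hp ((p.1, m2) : ℝ × ℝ) (Set.mem_univ _)
    have e1 : p.1 = m1 := by
      by_contra hne
      have := hstrict1 p.1 hne
      linarith
    have e2 : p.2 = m2 := by
      by_contra hne
      have := hstrict2 p.2 hne
      linarith
    exact Prod.ext e1 e2
end

section
/- For every label-smoothing parameter ε with 0 < ε ≤ 1/2, the Contrastive DPH loss L_con(r_w, r_l) = -(1-ε)·log σ(r_w - r_l) - ε·log σ(r_l - r_w), viewed as a function g(r_Δ) = -(1-ε)·log σ(r_Δ) - ε·log σ(-r_Δ) of the reward margin r_Δ = r_w - r_l, is convex on ℝ and attains its global minimum exactly at r_Δ = log((1-ε)/ε). -/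
noncomputable def gcon (ε rΔ : ℝ) : ℝ :=
  -(1 - ε) * Real.log (sigmoid rΔ) - ε * Real.log (sigmoid (-rΔ))

lemma gcon_eq (ε x : ℝ) : gcon ε x = Real.log (1 + Real.exp x) - (1 - ε) * x := by
  have h1 : (0:ℝ) < 1 + Real.exp x := one_add_exp_pos x
  have hs1 : sigmoid x = Real.exp x / (1 + Real.exp x) := by
    unfold sigmoid
    rw [Real.exp_neg]
    have he : Real.exp x ≠ 0 := Real.exp_ne_zero x
    field_simp
    ring
  have hs2 : sigmoid (-x) = 1 / (1 + Real.exp x) := by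
    unfold sigmoid; rw [neg_neg]
  rw [gcon, hs1, hs2, Real.log_div (Real.exp_ne_zero x) (ne_of_gt h1),
    Real.log_div one_ne_zero (ne_of_gt h1), Real.log_exp, Real.log_one]
  ring

lemma gcon_hasDerivAt (ε x : ℝ) :
    HasDerivAt (gcon ε) (Real.exp x / (1 + Real.exp x) - (1 - ε)) x := by
  have h1 : HasDerivAt (fun x : ℝ => 1 + Real.exp x) (Real.exp x) x :=
    (Real.hasDerivAt_exp x).const_add 1
  have h2 : HasDerivAt (fun x : ℝ => Real.log (1 + Real.exp x))
      (Real.exp x / (1 + Real.exp x)) x := h1.log (ne_of_gt (one_add_exp_pos x))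
  have h3 : HasDerivAt (fun x : ℝ => (1 - ε) * x) (1 - ε) x := by
    simpa using (hasDerivAt_id x).const_mul (1 - ε)
  refine ((h2.sub h3).congr_of_eventuallyEq ?_)
  filter_upwards with y using (gcon_eq ε y)

lemma gcon_deriv (ε x : ℝ) : deriv (gcon ε) x = Real.exp x / (1 + Real.exp x) - (1 - ε) :=
  (gcon_hasDerivAt ε x).deriv

lemma gcon_continuous (ε : ℝ) : Continuous (gcon ε) := by
  have : Continuous fun x : ℝ => Real.log (1 + Real.exp x) - (1 - ε) * x := by
    exact ((continuous_const.add Real.continuous_exp).log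
      (fun x => ne_of_gt (one_add_exp_pos x))).sub (continuous_const.mul continuous_id)
  exact this.congr fun y => (gcon_eq ε y).symm

lemma gcon_strictConvex (ε : ℝ) : StrictConvexOn ℝ Set.univ (gcon ε) := by
  apply StrictMono.strictConvexOn_univ_of_deriv (gcon_continuous ε)
  intro x y hxy
  rw [gcon_deriv, gcon_deriv]
  have hx := one_add_exp_pos x
  have hy := one_add_exp_pos y
  have hexy : Real.exp x < Real.exp y := Real.exp_lt_exp.mpr hxy
  have : Real.exp x / (1 + Real.exp x) < Real.exp y / (1 + Real.exp y) := by
    rw [div_lt_div_iff₀ hx hy]; nlinarith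
  linarith

/-- For `0 < ε ≤ 1/2`, the Contrastive DPH loss viewed as a function of the reward margin
`r_Δ = r_w - r_l` is convex on `ℝ` and attains its global minimum exactly at
`r_Δ = log((1-ε)/ε)`. -/
theorem con_dph_convex_and_unique_min (ε : ℝ) (hε0 : 0 < ε) (hε1 : ε ≤ 1 / 2) :
    ConvexOn ℝ Set.univ (gcon ε) ∧
    IsMinOn (gcon ε) Set.univ (Real.log ((1 - ε) / ε)) ∧
    ∀ rΔ : ℝ, IsMinOn (gcon ε) Set.univ rΔ → rΔ = Real.log ((1 - ε) / ε) := by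
  have hε1' : ε < 1 := lt_of_le_of_lt hε1 (by norm_num)
  have h1ε : 0 < 1 - ε := by linarith
  set x₀ := Real.log ((1 - ε) / ε) with hx₀
  have hexp0 : Real.exp x₀ = (1 - ε) / ε := Real.exp_log (by positivity)
  have hdiff : ∀ s : Set ℝ, DifferentiableOn ℝ (gcon ε) s := fun s =>
    fun x _ => (gcon_hasDerivAt ε x).differentiableAt.differentiableWithinAt
  -- monotone on Ici x₀
  have hmono : MonotoneOn (gcon ε) (Set.Ici x₀) := by
    apply monotoneOn_of_deriv_nonneg (convex_Ici x₀)
      (gcon_continuous ε).continuousOn (hdiff _)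
    intro x hx
    rw [interior_Ici] at hx
    rw [gcon_deriv]
    have hxp := one_add_exp_pos x
    have h1 : (1 - ε) / ε ≤ Real.exp x := by
      rw [← hexp0]; exact (Real.exp_le_exp.mpr (le_of_lt hx))
    have h2 : 1 - ε ≤ ε * Real.exp x := by
      rw [div_le_iff₀ hε0] at h1; linarith [h1]
    rw [sub_nonneg, le_div_iff₀ hxp]
    nlinarith
  have hanti : AntitoneOn (gcon ε) (Set.Iic x₀) := by
    apply antitoneOn_of_deriv_nonpos (convex_Iic x₀)
      (gcon_continuous ε).continuousOn (hdiff _)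
    intro x hx
    rw [interior_Iic] at hx
    rw [gcon_deriv]
    have hxp := one_add_exp_pos x
    have h1 : Real.exp x ≤ (1 - ε) / ε := by
      rw [← hexp0]; exact Real.exp_le_exp.mpr (le_of_lt hx)
    have h2 : ε * Real.exp x ≤ 1 - ε := by
      rw [le_div_iff₀ hε0] at h1; linarith [h1]
    rw [sub_nonpos, div_le_iff₀ hxp]
    nlinarith
  have hmin : IsMinOn (gcon ε) Set.univ x₀ := by
    rw [isMinOn_iff]
    intro y _
    rcases le_total x₀ y with h | h
    · exact hmono (Set.self_mem_Ici) h h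
    · exact hanti h Set.self_mem_Iic h
  refine ⟨(gcon_strictConvex ε).convexOn, hmin, ?_⟩
  intro r hr
  by_contra hne
  have h1 : gcon ε r ≤ gcon ε x₀ := (isMinOn_iff.mp hr) x₀ (Set.mem_univ _)
  have h2 : gcon ε x₀ ≤ gcon ε r := (isMinOn_iff.mp hmin) r (Set.mem_univ _)
  have heq : gcon ε r = gcon ε x₀ := le_antisymm h1 h2
  have hmid := (gcon_strictConvex ε).2 (Set.mem_univ r) (Set.mem_univ x₀) hne
    (by norm_num : (0:ℝ) < 1/2) (by norm_num : (0:ℝ) < 1/2) (by norm_num)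
  have h3 : gcon ε x₀ ≤ gcon ε ((1/2 : ℝ) • r + (1/2 : ℝ) • x₀) :=
    (isMinOn_iff.mp hmin) _ (Set.mem_univ _)
  rw [heq] at hmid
  simp only [smul_eq_mul] at hmid h3
  linarith [hmid, h3]
end
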